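/- arXiv:2305.01270 — 3 statements merged into one kernel-verified Lean document; each statement's English description precedes it below -/
import Mathlib

section
/- Let G be a (possibly nonabelian) group of order p^m for an odd prime p, equipped with an action of an involution σ. Then the nonabelian first cohomology set H¹(⟨σ⟩, G) is trivial: every g ∈ G with σ(g)·g = 1 equals h⁻¹·σ(h) for some h ∈ G. -/
/-!
A cocycle `g` satisfies `σ g = g⁻¹`. Its order divides `p ^ m`, hence is odd, so `g` is the
square of one of its own powers `a`; then `σ a = a⁻¹` and `g = a * a = (a⁻¹)⁻¹ * σ a⁻¹`.
-/

theorem odd_orderOf_of_card_eq_pow {G : Type*} [Group G] {p m : ℕ} (hpodd : Odd p)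
    (hcard : Nat.card G = p ^ m) (g : G) : Odd (orderOf g) :=
  (hpodd.pow (n := m)).of_dvd_nat (hcard ▸ orderOf_dvd_natCard g)

theorem exists_eq_inv_mul_map_of_map_eq_inv {G : Type*} [Group G] (σ : G →* G) {g : G}
    (hσg : σ g = g⁻¹) (hg : Odd (orderOf g)) : ∃ h : G, g = h⁻¹ * σ h := by
  obtain ⟨k, hk⟩ := exists_pow_eq_self_of_coprime (Nat.coprime_two_left.mpr hg)
  refine ⟨(g ^ k)⁻¹, ?_⟩
  calc g = (g ^ 2) ^ k := hk.symm
    _ = g ^ k * g ^ k := by rw [← pow_mul, two_mul, pow_add]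
    _ = (g ^ k)⁻¹⁻¹ * σ (g ^ k)⁻¹ := by rw [map_inv, map_pow, hσg, inv_pow, inv_inv]

theorem H1_odd_p_group_trivial_general
    (G : Type*) [Group G]
    (p m : ℕ) (hpodd : Odd p)
    (hcard : Nat.card G = p ^ m)
    (σ : G →* G) :
    ∀ g : G, σ g * g = 1 → ∃ h : G, g = h⁻¹ * σ h := fun g hg =>
  exists_eq_inv_mul_map_of_map_eq_inv σ (eq_inv_of_mul_eq_one_left hg)
    (odd_orderOf_of_card_eq_pow hpodd hcard g)

/-- If `G` is a (possibly nonabelian) group of order `p^m` for an odd prime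
`p`, with an involutive automorphism `σ`, then `H¹(⟨σ⟩, G)` is trivial: every `g` with
`σ g * g = 1` has the form `g = h⁻¹ * σ h`. -/
theorem H1_odd_p_group_trivial
    (G : Type*) [Group G] [Finite G]
    (p m : ℕ) (hp : p.Prime) (hpodd : Odd p)
    (hcard : Nat.card G = p ^ m)
    (σ : G →* G) (hσ : ∀ g : G, σ (σ g) = g) :
    ∀ g : G, σ g * g = 1 → ∃ h : G, g = h⁻¹ * σ h :=
  H1_odd_p_group_trivial_general G p m hpodd hcard σ
end

section
/- With C_p° as above, the subgroup of W mapping C_p° into itself equals the normalizer N_W(W_p), and the subgroup fixing C_p° pointwise equals W_p; hence Γ_p = N_W(W_p)/W_p acts faithfully on C_p°, and two elements of C_p° lie in the same W-orbit if and only if they lie in the same Γ_p-orbit. -/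
/-- The stabilizer `W_p` of `p` inside `W`, as a set. -/
def Wstab {C : Type*} [AddCommGroup C] [Module ℂ C]
    (W : Subgroup (C ≃ₗ[ℂ] C)) (p : C) : Set (C ≃ₗ[ℂ] C) :=
  {w : C ≃ₗ[ℂ] C | w ∈ W ∧ w p = p}

/-- `C_p° = {q : q is fixed by all of W_p and W_q = W_p}`. -/
def CpCirc {C : Type*} [AddCommGroup C] [Module ℂ C]
    (W : Subgroup (C ≃ₗ[ℂ] C)) (p : C) : Set C :=
  {x : C | (∀ w ∈ Wstab W p, w x = x) ∧ Wstab W x = Wstab W p}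

/-!
For `v ∈ W` the stabilizer of `v q` is `v W_q v⁻¹`, and every `q ∈ C_p°` has `W_q = W_p`; so `v`
sends a point of `C_p°` into `C_p°` exactly when it normalizes `W_p`. Testing at `p ∈ C_p°` then
identifies the setwise and pointwise stabilizers.
-/

section

variable {C : Type*} [AddCommGroup C] [Module ℂ C] {W : Subgroup (C ≃ₗ[ℂ] C)}
  {v : C ≃ₗ[ℂ] C} {p q : C}

theorem mem_Wstab_apply_iff (hv : v ∈ W) (q : C) (w : C ≃ₗ[ℂ] C) :
    w ∈ Wstab W (v q) ↔ v⁻¹ * w * v ∈ Wstab W q := by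
  have hw : v * (v⁻¹ * w * v) * v⁻¹ = w := by group
  constructor
  · rintro ⟨hwW, hwq⟩
    refine ⟨W.mul_mem (W.mul_mem (W.inv_mem hv) hwW) hv, ?_⟩
    change v.symm (w (v q)) = q
    rw [hwq, v.symm_apply_apply]
  · rintro ⟨hconjW, hconjq⟩
    rw [← hw]
    refine ⟨W.mul_mem (W.mul_mem hv hconjW) (W.inv_mem hv), ?_⟩
    change v ((v⁻¹ * w * v) (v.symm (v q))) = v q
    rw [v.symm_apply_apply, hconjq]

theorem Wstab_apply_eq_self_iff (hv : v ∈ W) (q : C) :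
    Wstab W (v q) = Wstab W q ↔ v ∈ Subgroup.normalizer (Wstab W q) := by
  simp only [Set.ext_iff, mem_Wstab_apply_iff hv, Subgroup.mem_set_normalizer_iff'', Iff.comm]

theorem CpCirc.mem_iff {x : C} : x ∈ CpCirc W p ↔ Wstab W x = Wstab W p :=
  ⟨And.right, fun hx => ⟨fun w hw => (hx ▸ hw : w ∈ Wstab W x).2, hx⟩⟩

theorem CpCirc.self_mem (W : Subgroup (C ≃ₗ[ℂ] C)) (p : C) : p ∈ CpCirc W p :=
  CpCirc.mem_iff.2 rfl

theorem CpCirc.apply_mem_iff (hv : v ∈ W) (hq : q ∈ CpCirc W p) :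
    v q ∈ CpCirc W p ↔ v ∈ Subgroup.normalizer (Wstab W p) := by
  rw [CpCirc.mem_iff] at hq ⊢
  rw [← hq, Wstab_apply_eq_self_iff hv]

end

theorem normalizer_acts_on_CpCirc_general
    (C : Type*) [AddCommGroup C] [Module ℂ C]
    (W : Subgroup (C ≃ₗ[ℂ] C))
    (p : C) :
    -- the setwise stabilizer of `C_p°` in `W` is the normalizer of `W_p`
    ({v : C ≃ₗ[ℂ] C | v ∈ W ∧ ∀ q ∈ CpCirc W p, v q ∈ CpCirc W p} =
      {v : C ≃ₗ[ℂ] C | v ∈ W ∧ ∀ w : C ≃ₗ[ℂ] C, w ∈ Wstab W p ↔ v * w * v⁻¹ ∈ Wstab W p}) ∧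
    -- the pointwise stabilizer of `C_p°` in `W` is `W_p` (faithfulness of the `Γ_p`-action)
    ({v : C ≃ₗ[ℂ] C | v ∈ W ∧ ∀ q ∈ CpCirc W p, v q = q} = Wstab W p) ∧
    -- two elements of `C_p°` are `W`-conjugate iff they are `N_W(W_p)`-conjugate
    (∀ q₁ ∈ CpCirc W p, ∀ q₂ ∈ CpCirc W p,
      ((∃ w ∈ W, w q₁ = q₂) ↔
        ∃ v : C ≃ₗ[ℂ] C, v ∈ W ∧
          (∀ w : C ≃ₗ[ℂ] C, w ∈ Wstab W p ↔ v * w * v⁻¹ ∈ Wstab W p) ∧ v q₁ = q₂)) := by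
  have hp : p ∈ CpCirc W p := CpCirc.self_mem W p
  refine ⟨?setwise, ?pointwise, ?orbits⟩
  case setwise =>
    ext v
    exact ⟨fun ⟨hv, hmaps⟩ => ⟨hv, (CpCirc.apply_mem_iff hv hp).1 (hmaps p hp)⟩,
      fun ⟨hv, hnorm⟩ => ⟨hv, fun q hq => (CpCirc.apply_mem_iff hv hq).2 hnorm⟩⟩
  case pointwise =>
    ext v
    exact ⟨fun ⟨hv, hfix⟩ => ⟨hv, hfix p hp⟩,
      fun hv => ⟨hv.1, fun q hq => hq.1 v hv⟩⟩
  case orbits =>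
    intro q₁ hq₁ q₂ hq₂
    constructor
    · rintro ⟨w, hw, rfl⟩
      exact ⟨w, hw, (CpCirc.apply_mem_iff hw hq₁).1 hq₂, rfl⟩
    · rintro ⟨v, hv, -, hvq⟩
      exact ⟨v, hv, hvq⟩

/-- The subgroup of `W` mapping `C_p°` into itself is the normalizer
`N_W(W_p)`; the subgroup fixing `C_p°` pointwise is `W_p` (so `Γ_p = N_W(W_p)/W_p` acts
faithfully on `C_p°`); and two elements of `C_p°` are `W`-conjugate iff they are
conjugate under `N_W(W_p)` (i.e. under `Γ_p`). -/
theorem normalizer_acts_on_CpCirc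
    (C : Type*) [AddCommGroup C] [Module ℂ C] [FiniteDimensional ℂ C]
    (W : Subgroup (C ≃ₗ[ℂ] C)) (hWfin : (W : Set (C ≃ₗ[ℂ] C)).Finite)
    -- `W` is a complex reflection group: it is generated by its complex reflections
    (hWrefl : Subgroup.closure {w : C ≃ₗ[ℂ] C | w ∈ W ∧ w ≠ 1 ∧
        Module.finrank ℂ (LinearMap.ker ((w : C →ₗ[ℂ] C) - LinearMap.id)) =
          Module.finrank ℂ C - 1} = W)
    (p : C) :
    -- the setwise stabilizer of `C_p°` in `W` is the normalizer of `W_p`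
    ({v : C ≃ₗ[ℂ] C | v ∈ W ∧ ∀ q ∈ CpCirc W p, v q ∈ CpCirc W p} =
      {v : C ≃ₗ[ℂ] C | v ∈ W ∧ ∀ w : C ≃ₗ[ℂ] C, w ∈ Wstab W p ↔ v * w * v⁻¹ ∈ Wstab W p}) ∧
    -- the pointwise stabilizer of `C_p°` in `W` is `W_p` (faithfulness of the `Γ_p`-action)
    ({v : C ≃ₗ[ℂ] C | v ∈ W ∧ ∀ q ∈ CpCirc W p, v q = q} = Wstab W p) ∧
    -- two elements of `C_p°` are `W`-conjugate iff they are `N_W(W_p)`-conjugate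
    (∀ q₁ ∈ CpCirc W p, ∀ q₂ ∈ CpCirc W p,
      ((∃ w ∈ W, w q₁ = q₂) ↔
        ∃ v : C ≃ₗ[ℂ] C, v ∈ W ∧
          (∀ w : C ≃ₗ[ℂ] C, w ∈ Wstab W p ↔ v * w * v⁻¹ ∈ Wstab W p) ∧ v q₁ = q₂)) :=
  normalizer_acts_on_CpCirc_general C W p
end

section
/- The subgroup of SL(3,ℂ)³ consisting of the elements diag(δ²ζ², εδ²ζ², εδ²ζ²) × diag(δ, εδ, εδ) × diag(εζ, εζ, ζ), where ζ, δ range over cube roots of unity and ε over {±1}, is a group isomorphic to Z/3Z × Z/3Z × Z/2Z (in particular it has order 18), and it stabilizes the tensor |002⟩+|011⟩+|020⟩+|101⟩+|112⟩+|200⟩ ∈ ℂ³⊗ℂ³⊗ℂ³. -/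
/-!
All three matrices are diagonal, so the tensor is fixed exactly when each of its six basis
terms has weight one; every such weight is `δ³ζ³` or `ε²δ³ζ³`. The parametrisation
`(ζ, δ, ε) ↦ triple` is multiplicative on `μ₃ × μ₃ × μ₂`, and injective because `δ`, `ζ` and
`εζ` are diagonal entries; since `μₙ(ℂ)` is cyclic of order `n`, the image is isomorphic to
`ℤ/3 × ℤ/3 × ℤ/2`.
-/

open Matrix

/-- `ℂ³ ⊗ ℂ³ ⊗ ℂ³` in coordinates. -/
abbrev Qutrit3 : Type := Fin 3 → Fin 3 → Fin 3 → ℂ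

/-- The basis vector `|abc⟩ = e_a ⊗ e_b ⊗ e_c`. -/
noncomputable def ket (a b c : Fin 3) : Qutrit3 :=
  fun j k l => if j = a ∧ k = b ∧ l = c then 1 else 0

/-- The action `(g₁,g₂,g₃)·(v₁⊗v₂⊗v₃) = g₁v₁⊗g₂v₂⊗g₃v₃` in coordinates. -/
noncomputable def actQ (g₁ g₂ g₃ : Matrix (Fin 3) (Fin 3) ℂ) (v : Qutrit3) : Qutrit3 :=
  fun j k l => ∑ a, ∑ b, ∑ c, g₁ j a * g₂ k b * g₃ l c * v a b c

/-- The set of triples `diag(δ²ζ², εδ²ζ², εδ²ζ²) × diag(δ, εδ, εδ) × diag(εζ, εζ, ζ)`,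
with `ζ³ = δ³ = 1` and `ε² = 1`. -/
noncomputable def stabSet :
    Set (Matrix (Fin 3) (Fin 3) ℂ × Matrix (Fin 3) (Fin 3) ℂ × Matrix (Fin 3) (Fin 3) ℂ) :=
  {x | ∃ ζ δ ε : ℂ, ζ ^ 3 = 1 ∧ δ ^ 3 = 1 ∧ ε ^ 2 = 1 ∧
    x = (Matrix.diagonal ![δ^2 * ζ^2, ε * δ^2 * ζ^2, ε * δ^2 * ζ^2],
         Matrix.diagonal ![δ, ε * δ, ε * δ],
         Matrix.diagonal ![ε * ζ, ε * ζ, ζ])}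

section Triple

variable {R : Type*} [CommRing R]

theorem diagonal_vecCons3_mul (a b c a' b' c' : R) :
    diagonal ![a, b, c] * diagonal ![a', b', c'] = diagonal ![a * a', b * b', c * c'] := by
  rw [diagonal_mul_diagonal]
  congr 1
  ext i; fin_cases i <;> rfl

theorem diagonal_vecCons3_one : diagonal ![(1 : R), 1, 1] = 1 := by
  rw [← diagonal_one]
  congr 1
  ext i; fin_cases i <;> rfl

theorem det_diagonal_vecCons3 (a b c : R) : (diagonal ![a, b, c]).det = a * b * c := by
  rw [det_diagonal, Fin.prod_univ_three]; rfl

def stabTriple (ζ δ ε : R) :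
    Matrix (Fin 3) (Fin 3) R × Matrix (Fin 3) (Fin 3) R × Matrix (Fin 3) (Fin 3) R :=
  (diagonal ![δ^2 * ζ^2, ε * δ^2 * ζ^2, ε * δ^2 * ζ^2],
   diagonal ![δ, ε * δ, ε * δ],
   diagonal ![ε * ζ, ε * ζ, ζ])

theorem stabTriple_mul (ζ δ ε ζ' δ' ε' : R) :
    stabTriple ζ δ ε * stabTriple ζ' δ' ε' = stabTriple (ζ * ζ') (δ * δ') (ε * ε') := by
  simp only [stabTriple, Prod.mk_mul_mk, diagonal_vecCons3_mul]
  ring_nf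

theorem stabTriple_one : stabTriple (1 : R) 1 1 = 1 := by
  simp only [stabTriple, one_pow, mul_one, diagonal_vecCons3_one]
  rfl

theorem det_stabTriple {ζ δ ε : R} (hζ : ζ ^ 3 = 1) (hδ : δ ^ 3 = 1) (hε : ε ^ 2 = 1) :
    (stabTriple ζ δ ε).1.det = 1 ∧ (stabTriple ζ δ ε).2.1.det = 1 ∧
      (stabTriple ζ δ ε).2.2.det = 1 := by
  simp only [stabTriple, det_diagonal_vecCons3]
  refine ⟨?_, ?_, ?_⟩
  · linear_combination δ ^ 6 * ζ ^ 6 * hε + ζ ^ 6 * (δ ^ 3 + 1) * hδ + (ζ ^ 3 + 1) * hζ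
  · linear_combination δ ^ 3 * hε + hδ
  · linear_combination ζ ^ 3 * hε + hζ

theorem eq_of_stabTriple_eq {ζ δ ε ζ' δ' ε' : R} (hζ : IsUnit ζ)
    (h : stabTriple ζ δ ε = stabTriple ζ' δ' ε') : ζ = ζ' ∧ δ = δ' ∧ ε = ε' := by
  simp only [stabTriple, Prod.mk.injEq] at h
  obtain ⟨-, h₂, h₃⟩ := h
  have hζ' : ζ = ζ' := by simpa using congr_fun (congr_fun h₃ 2) 2
  have hεζ : ε * ζ = ε' * ζ' := by simpa using congr_fun (congr_fun h₃ 0) 0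
  refine ⟨hζ', by simpa using congr_fun (congr_fun h₂ 0) 0, ?_⟩
  rw [← hζ'] at hεζ
  exact hζ.mul_left_injective hεζ

end Triple

theorem actQ_add (g₁ g₂ g₃ : Matrix (Fin 3) (Fin 3) ℂ) (v w : Qutrit3) :
    actQ g₁ g₂ g₃ (v + w) = actQ g₁ g₂ g₃ v + actQ g₁ g₂ g₃ w := by
  funext j k l
  simp only [actQ, Pi.add_apply, mul_add, Finset.sum_add_distrib]

theorem actQ_diagonal_apply (a b c : Fin 3 → ℂ) (v : Qutrit3) (j k l : Fin 3) :
    actQ (diagonal a) (diagonal b) (diagonal c) v j k l = a j * b k * c l * v j k l := by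
  simp [actQ, diagonal_apply, ite_mul, Finset.sum_ite_eq]

theorem actQ_diagonal_ket (a b c : Fin 3 → ℂ) (i j k : Fin 3) :
    actQ (diagonal a) (diagonal b) (diagonal c) (ket i j k) = (a i * b j * c k) • ket i j k := by
  funext j' k' l'
  rw [actQ_diagonal_apply, Pi.smul_apply, Pi.smul_apply, Pi.smul_apply, smul_eq_mul, ket]
  split_ifs with h
  · obtain ⟨rfl, rfl, rfl⟩ := h
    rfl
  · simp

theorem actQ_stabTriple {ζ δ ε : ℂ} (hζ : ζ ^ 3 = 1) (hδ : δ ^ 3 = 1) (hε : ε ^ 2 = 1) :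
    actQ (stabTriple ζ δ ε).1 (stabTriple ζ δ ε).2.1 (stabTriple ζ δ ε).2.2
        (ket 0 0 2 + ket 0 1 1 + ket 0 2 0 + ket 1 0 1 + ket 1 1 2 + ket 2 0 0) =
      ket 0 0 2 + ket 0 1 1 + ket 0 2 0 + ket 1 0 1 + ket 1 1 2 + ket 2 0 0 := by
  simp only [stabTriple, actQ_add, actQ_diagonal_ket, Fin.isValue, cons_val_zero, cons_val,
    cons_val_one]
  have h₁ : δ ^ 2 * ζ ^ 2 * δ * ζ = 1 := by linear_combination ζ ^ 3 * hδ + hζ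
  have h₂ : δ ^ 2 * ζ ^ 2 * (ε * δ) * (ε * ζ) = 1 := by
    linear_combination δ ^ 3 * ζ ^ 3 * hε + ζ ^ 3 * hδ + hζ
  have h₃ : ε * δ ^ 2 * ζ ^ 2 * δ * (ε * ζ) = 1 := by linear_combination h₂
  have h₄ : ε * δ ^ 2 * ζ ^ 2 * (ε * δ) * ζ = 1 := by linear_combination h₂
  simp only [h₁, h₂, h₃, h₄, one_smul]

theorem MonoidHom.nonempty_mrange_mulEquiv_of_injective {G M : Type*} [Monoid G] [Monoid M]
    (f : G →* M) (hf : Function.Injective f) : Nonempty (MonoidHom.mrange f ≃* G) :=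
  ⟨(MulEquiv.ofBijective f.mrangeRestrict
    ⟨fun _ _ h ↦ hf (congrArg Subtype.val h), f.mrangeRestrict_surjective⟩).symm⟩

noncomputable def rootsOfUnityMulEquivZMod (n : ℕ) [NeZero n] :
    rootsOfUnity n ℂ ≃* Multiplicative (ZMod n) :=
  mulEquivOfCyclicCardEq ((Complex.card_rootsOfUnity n).trans (Nat.card_zmod n).symm)

noncomputable def stabHom : rootsOfUnity 3 ℂ × rootsOfUnity 3 ℂ × rootsOfUnity 2 ℂ →*
    Matrix (Fin 3) (Fin 3) ℂ × Matrix (Fin 3) (Fin 3) ℂ × Matrix (Fin 3) (Fin 3) ℂ where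
  toFun x := stabTriple ((x.1 : ℂˣ) : ℂ) ((x.2.1 : ℂˣ) : ℂ) ((x.2.2 : ℂˣ) : ℂ)
  map_one' := by simp [stabTriple_one]
  map_mul' x y := by simp [stabTriple_mul]

theorem stabHom_injective : Function.Injective stabHom := by
  intro x y h
  obtain ⟨hζ, hδ, hε⟩ := eq_of_stabTriple_eq (Units.isUnit _) h
  exact Prod.ext (Subtype.ext (Units.ext hζ))
    (Prod.ext (Subtype.ext (Units.ext hδ)) (Subtype.ext (Units.ext hε)))

theorem range_stabHom : Set.range stabHom = stabSet := by
  ext x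
  constructor
  · rintro ⟨⟨ζ, δ, ε⟩, rfl⟩
    exact ⟨_, _, _, (mem_rootsOfUnity' _ _).1 ζ.2, (mem_rootsOfUnity' _ _).1 δ.2,
      (mem_rootsOfUnity' _ _).1 ε.2, rfl⟩
  · rintro ⟨ζ, δ, ε, hζ, hδ, hε, rfl⟩
    exact ⟨(rootsOfUnity.mkOfPowEq ζ hζ, rootsOfUnity.mkOfPowEq δ hδ,
      rootsOfUnity.mkOfPowEq ε hε), by simp [stabHom, stabTriple]⟩

/-- The above set of matrix triples lies in `SL(3,ℂ)³`, forms a group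
isomorphic to `ℤ/3 × ℤ/3 × ℤ/2` (in particular of order 18), and stabilizes the tensor
`|002⟩+|011⟩+|020⟩+|101⟩+|112⟩+|200⟩`. -/
theorem stabSet_is_group_of_order_18 :
    (∀ x ∈ stabSet, x.1.det = 1 ∧ x.2.1.det = 1 ∧ x.2.2.det = 1) ∧
    (∃ H : Submonoid (Matrix (Fin 3) (Fin 3) ℂ × Matrix (Fin 3) (Fin 3) ℂ ×
        Matrix (Fin 3) (Fin 3) ℂ), (H : Set _) = stabSet ∧
      Nonempty (H ≃* (Multiplicative (ZMod 3) × Multiplicative (ZMod 3) ×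
        Multiplicative (ZMod 2)))) ∧
    Nat.card stabSet = 18 ∧
    (∀ x ∈ stabSet, actQ x.1 x.2.1 x.2.2
        (ket 0 0 2 + ket 0 1 1 + ket 0 2 0 + ket 1 0 1 + ket 1 1 2 + ket 2 0 0) =
      ket 0 0 2 + ket 0 1 1 + ket 0 2 0 + ket 1 0 1 + ket 1 1 2 + ket 2 0 0) := by
  refine ⟨?_, ?_, ?_, ?_⟩
  · rintro _ ⟨ζ, δ, ε, hζ, hδ, hε, rfl⟩
    exact det_stabTriple hζ hδ hε
  · obtain ⟨e⟩ := stabHom.nonempty_mrange_mulEquiv_of_injective stabHom_injective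
    refine ⟨MonoidHom.mrange stabHom, by rw [MonoidHom.coe_mrange, range_stabHom], ⟨e.trans ?_⟩⟩
    exact (rootsOfUnityMulEquivZMod 3).prodCongr
      ((rootsOfUnityMulEquivZMod 3).prodCongr (rootsOfUnityMulEquivZMod 2))
  · rw [← range_stabHom, Nat.card_range_of_injective stabHom_injective]
    simp only [Nat.card_prod, Complex.card_rootsOfUnity]
  · rintro _ ⟨ζ, δ, ε, hζ, hδ, hε, rfl⟩
    exact actQ_stabTriple hζ hδ hε
end
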